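/- For every j, the L² norm of the Littlewood-Paley piece U_{q_j} of the field U is comparable to λ_{q_j}^{2α−5/2}: there are absolute constants 0 < c ≤ C (independent of j) with c·λ_{q_j}^{2α−5/2} ≤ |U_{q_j}|_{L²(T³)} ≤ C·λ_{q_j}^{2α−5/2}. -/

import Mathlib

open MeasureTheory Filter
open scoped ENNReal Topology Pointwise BigOperators

noncomputable section

/-- Points of the torus `T³ = (ℝ/2πℤ)³`, represented by `ℝ³`. -/
abbrev Pt : Type := Fin 3 → ℝ

/-- Values of vector fields. -/
abbrev Vec : Type := Fin 3 → ℝ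

/-- Vector fields on the torus (2π-periodic functions on `ℝ³`). -/
abbrev VF : Type := Pt → Vec

/-- Frequencies. -/
abbrev Frq : Type := Fin 3 → ℤ

/-- A fundamental domain `[0,2π)³` for the torus. -/
def torusCube : Set Pt := Set.univ.pi fun _ => Set.Ico 0 (2 * Real.pi)

/-- The measure on the torus: Lebesgue measure restricted to the fundamental domain. -/
def μT : Measure Pt := volume.restrict torusCube

/-- `ξ · x` for a frequency `ξ ∈ ℤ³` and a point `x`. -/
def fdot (ξ : Frq) (x : Pt) : ℝ := ∑ i, (ξ i : ℝ) * x i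

/-- The character `e^{i ξ·x}`. -/
def fchar (ξ : Frq) (x : Pt) : ℂ := Complex.exp (Complex.I * (fdot ξ x : ℝ))

/-- Fourier coefficient `û(ξ) = (2π)⁻³ ∫_{T³} u(x) e^{-iξ·x} dx` of a scalar function. -/
def fcoefC (f : Pt → ℂ) (ξ : Frq) : ℂ :=
  (((2 * Real.pi) ^ (3 : ℕ))⁻¹ : ℝ) • ∫ x in torusCube, f x * Complex.exp (-(Complex.I * (fdot ξ x : ℝ)))

/-- Fourier coefficients of a vector field, componentwise. -/
def fcoef (u : VF) (ξ : Frq) (i : Fin 3) : ℂ := fcoefC (fun x => (u x i : ℂ)) ξ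

/-- Euclidean norm `|ξ|` of a frequency. -/
def freqNorm (ξ : Frq) : ℝ := Real.sqrt (∑ i, ((ξ i : ℝ)) ^ 2)

/-- Dyadic wavenumbers `λ_q = 2^q`. -/
def lam (q : ℕ) : ℝ := 2 ^ q

/-- The `q`-th dyadic shell: `λ_{q-1} < |ξ| < λ_{q+1}` for `q ≥ 1`, and `|ξ| < 2` for `q = 0`. -/
def inShell (q : ℕ) (ξ : Frq) : Prop :=
  if q = 0 then freqNorm ξ < 2 else lam (q - 1) < freqNorm ξ ∧ freqNorm ξ < lam (q + 1)

/-- The Littlewood–Paley piece `u_q`: projection onto Fourier modes in the `q`-th shell. -/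
def LP (q : ℕ) (u : VF) : VF := fun x i =>
  (∑' ξ : Frq, Set.indicator {ξ : Frq | inShell q ξ} (fun ξ => fcoef u ξ i * fchar ξ x) ξ).re

/-- `u_{≤ q} = ∑_{p=0}^q u_p`. -/
def LPle (q : ℕ) (u : VF) : VF := fun x i => ∑ p ∈ Finset.range (q + 1), LP p u x i

/-- `u_{≥ q} = ∑_{p ≥ q} u_p = u - u_{≤ q-1}` (for `q ≥ 1`). -/
def LPge (q : ℕ) (u : VF) : VF := fun x i => u x i - LPle (q - 1) u x i

/-- The extended projection `ũ_q = u_{q-1} + u_q + u_{q+1}`. -/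
def LPt (q : ℕ) (u : VF) : VF := fun x i => LP (q - 1) u x i + LP q u x i + LP (q + 1) u x i

/-- The `L^r(T³)` norm `|u|_r` (real-valued). -/
def lpn (r : ℝ≥0∞) (u : VF) : ℝ := (eLpNorm u r μT).toReal

/-- The Besov norm `‖u‖_{B^s_{r,∞}} = sup_{q ≥ 0} λ_q^s |u_q|_r`, valued in `ℝ≥0∞`. -/
def besov (s : ℝ) (r : ℝ≥0∞) (u : VF) : ℝ≥0∞ :=
  ⨆ q : ℕ, ENNReal.ofReal (lam q ^ s) * eLpNorm (LP q u) r μT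

/-- The square of the `L²` norm of `|∇|^a u`, computed via Plancherel:
`| |∇|^a u |₂² = (2π)³ ∑_ξ |ξ|^{2a} |û(ξ)|²`, valued in `ℝ≥0∞`. -/
def sobSq (a : ℝ) (u : VF) : ℝ≥0∞ :=
  ENNReal.ofReal ((2 * Real.pi) ^ (3 : ℕ)) *
    ∑' ξ : Frq, ENNReal.ofReal (freqNorm ξ ^ (2 * a) * ∑ i, ‖fcoef u ξ i‖ ^ 2)

/-- `| |∇|^a u |_{L²}` (real-valued). -/
def sobn (a : ℝ) (u : VF) : ℝ := Real.sqrt (sobSq a u).toReal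

/-- Partial derivative `∂_i f`. -/
def pd (i : Fin 3) (f : Pt → ℝ) (x : Pt) : ℝ := fderiv ℝ f x (Pi.single i 1)

/-- The trilinear form `u ⊗ v : ∇w = ∫_{T³} v_i ∂_i w_j u_j dx`. -/
def tri (u v w : VF) : ℝ :=
  ∫ x in torusCube, ∑ i, ∑ j, v x i * pd i (fun y => w y j) x * u x j

/-- The lattice block `A_j` (at wavenumber `λ_m`). -/
def blockA (m : ℕ) : Set Frq :=
  {ξ | 9 / 10 * lam m ≤ (ξ 0 : ℝ) ∧ (ξ 0 : ℝ) ≤ 11 / 10 * lam m ∧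
       |(ξ 1 : ℝ)| ≤ lam m / 10 ∧ |(ξ 2 : ℝ)| ≤ lam m / 10}

/-- The lattice block `B_j` (at wavenumber `λ_{m-1}`). -/
def blockB (m : ℕ) : Set Frq :=
  {ξ | |(ξ 0 : ℝ)| ≤ lam (m - 1) / 10 ∧ |(ξ 1 : ℝ)| ≤ lam (m - 1) / 10 ∧
       9 / 10 * lam (m - 1) ≤ (ξ 2 : ℝ) ∧ (ξ 2 : ℝ) ≤ 11 / 10 * lam (m - 1)}

/-- `C_j = A_j + B_j`. -/
def blockC (m : ℕ) : Set Frq := blockA m + blockB m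

/-- `e_k(ξ) = p(ξ) e_k` where `p(ξ) = Id - |ξ|⁻² ξ⊗ξ` (`p(0) = Id`) is the Leray projection symbol. -/
def esymb (k : Fin 3) (ξ : Frq) : Vec :=
  if ξ = 0 then Pi.single k 1
  else fun i => (Pi.single k 1 : Vec) i - (ξ i : ℝ) * (ξ k : ℝ) / (∑ m, ((ξ m : ℝ)) ^ 2)

/-- The matrix of the Leray projection symbol `p(ξ)`. -/
def lerayMat (ξ : Frq) (i j : Fin 3) : ℝ :=
  if ξ = 0 then (if i = j then 1 else 0)
  else (if i = j then 1 else 0) - (ξ i : ℝ) * (ξ j : ℝ) / (∑ m, ((ξ m : ℝ)) ^ 2)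

/-- The Fourier coefficients `Û_{q_j}(ξ)` of the high piece of the `j`-th building block:
`λ_{q_j}^{2α-4} ( e₂(ξ) χ_{A_j ∪ A_j*} + i (e₂(ξ)-e₁(ξ)) χ_{C_j} - i (e₂(ξ)-e₁(ξ)) χ_{C_j*} )`. -/
def UhatH (α : ℝ) (qs : ℕ → ℕ) (j : ℕ) (ξ : Frq) (i : Fin 3) : ℂ :=
  (lam (qs j) ^ (2 * α - 4) : ℝ) *
    (Set.indicator (blockA (qs j) ∪ -blockA (qs j)) (fun ξ => ((esymb 1 ξ i : ℝ) : ℂ)) ξ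
      + Complex.I *
          Set.indicator (blockC (qs j)) (fun ξ => ((esymb 1 ξ i - esymb 0 ξ i : ℝ) : ℂ)) ξ
      - Complex.I *
          Set.indicator (-blockC (qs j)) (fun ξ => ((esymb 1 ξ i - esymb 0 ξ i : ℝ) : ℂ)) ξ)

/-- The Fourier coefficients `Û_{q_j - 1}(ξ) = λ_{q_j}^{2α-4} e₁(ξ) χ_{B_j ∪ B_j*}(ξ)`. -/
def UhatL (α : ℝ) (qs : ℕ → ℕ) (j : ℕ) (ξ : Frq) (i : Fin 3) : ℂ :=
  (lam (qs j) ^ (2 * α - 4) : ℝ) *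
    Set.indicator (blockB (qs j) ∪ -blockB (qs j)) (fun ξ => ((esymb 0 ξ i : ℝ) : ℂ)) ξ

/-- The Fourier coefficients of `U = ∑_{j}(U_{q_j} + U_{q_j - 1})`. -/
def Uhat (α : ℝ) (qs : ℕ → ℕ) (ξ : Frq) (i : Fin 3) : ℂ :=
  ∑' j : ℕ, (UhatH α qs j ξ i + UhatL α qs j ξ i)

/-- The field `U_{q_j}` (with Fourier coefficients `UhatH`). -/
def UpH (α : ℝ) (qs : ℕ → ℕ) (j : ℕ) : VF := fun x i =>
  (∑' ξ : Frq, UhatH α qs j ξ i * fchar ξ x).re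

/-- The field `U_{q_j - 1}` (with Fourier coefficients `UhatL`). -/
def UpL (α : ℝ) (qs : ℕ → ℕ) (j : ℕ) : VF := fun x i =>
  (∑' ξ : Frq, UhatL α qs j ξ i * fchar ξ x).re

/-- `Ũ_{q_j} = U_{q_j-1} + U_{q_j}` (as `U` has no modes in the `(q_j+1)`-st shell). -/
def Upt (α : ℝ) (qs : ℕ → ℕ) (j : ℕ) : VF := fun x i => UpL α qs j x i + UpH α qs j x i

/-- `U_{≤ q_{j-1}} = ∑_{k ≤ j-1} (U_{q_k} + U_{q_k - 1})`. -/
def UleBlocks (α : ℝ) (qs : ℕ → ℕ) (j : ℕ) : VF := fun x i =>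
  ∑ k ∈ Finset.range j, (UpL α qs k x i + UpH α qs k x i)

/-- The sequence `(q_j)` is strictly increasing, consists of positive integers, and is lacunary
enough: `λ_{q_j}^{2α} λ_{q_{j+1}}^{4α-5} < 1`. -/
def GoodSeq (α : ℝ) (qs : ℕ → ℕ) : Prop :=
  StrictMono qs ∧ (∀ j, 1 ≤ qs j) ∧
    ∀ j, lam (qs j) ^ (2 * α) * lam (qs (j + 1)) ^ (4 * α - 5) < 1

/-- Energy dissipation `E(t) = ∫₀ᵗ | |∇|^a u(s) |₂² ds`. -/
def En (a : ℝ) (u : ℝ → VF) (t : ℝ) : ℝ := ∫ s in Set.Ioo (0 : ℝ) t, (sobn a (u s)) ^ 2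

/-- A weak solution on `[0,T)` of the fractional Navier–Stokes equations
`∂_t u + (u·∇)u + ∇p = -ν(-Δ)^α u`, `∇·u = 0`, with initial datum `U`:
`u ∈ C_w([0,T); L²) ∩ L²([0,T); H¹)`, divergence-free, the equation holds distributionally
(encoded mode-by-mode, with the pressure eliminated by the Leray projection), and
`u(t) → U` strongly in `L²` as `t → 0+`. -/
structure IsWeakSolution (α ν T : ℝ) (u : ℝ → VF) (U : VF) : Prop where
  memL2 : ∀ t ∈ Set.Ico (0 : ℝ) T, MemLp (u t) 2 μT
  weakCont : ∀ φ : VF, MemLp φ 2 μT →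
    ContinuousOn (fun t => ∫ x in torusCube, ∑ i, u t x i * φ x i) (Set.Ico 0 T)
  l2h1 : IntegrableOn (fun s => (lpn 2 (u s)) ^ 2 + (sobn 1 (u s)) ^ 2) (Set.Ioo 0 T)
  h1fin : ∀ᵐ s ∂volume.restrict (Set.Ioo (0 : ℝ) T), sobSq 1 (u s) < ⊤
  divFree : ∀ t ∈ Set.Ico (0 : ℝ) T, ∀ ξ : Frq, ∑ i, (ξ i : ℂ) * fcoef (u t) ξ i = 0
  eqn : ∀ t ∈ Set.Ioo (0 : ℝ) T, ∀ ξ : Frq, ∀ i : Fin 3,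
    fcoef (u t) ξ i = fcoef U ξ i -
      ∫ s in Set.Ioo (0 : ℝ) t,
        ((ν : ℂ) * (freqNorm ξ ^ (2 * α) : ℝ) * fcoef (u s) ξ i
          + Complex.I * ∑ j : Fin 3, (lerayMat ξ i j : ℝ) *
              ∑ k : Fin 3, (ξ k : ℂ) * fcoefC (fun x => ((u s x k * u s x j : ℝ) : ℂ)) ξ)
  init : Tendsto (fun t => eLpNorm (fun x => u t x - U x) 2 μT) (𝓝[>] (0 : ℝ)) (𝓝 0)


/-!
`U_{q_j}` is the real part of a trigonometric polynomial whose coefficients satisfy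
`Û(-ξ) = conj Û(ξ)`, so by orthogonality of the characters on `[0,2π)³` the integral of
`∑ᵢ |U_{q_j,i}|²` is `(2π)³ ∑_ξ |Û(ξ)|²`; since `lpn` measures vectors in the sup norm, this
determines `|U_{q_j}|₂²` up to a factor `3`. Every coefficient is `O(λ^{2α-4})` and they are
supported in a lattice cube of side `O(λ)`, while on the `≳ λ³` lattice points of `A_j` the real
part of the second component is at least `λ^{2α-4}/2`, because there `p(ξ)e₂ · e₂ ≥ 1/2`.
Hence `|U_{q_j}|₂² ∼ λ³ λ^{4α-8} = λ^{4α-5}`.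
-/

open scoped Real Finset ComplexConjugate

lemma integral_Ico_exp_I_int_mul (k : ℤ) :
    ∫ t in Set.Ico 0 (2 * π), Complex.exp (Complex.I * k * t) =
      if k = 0 then ((2 * π : ℝ) : ℂ) else 0 := by
  rw [Measure.restrict_congr_set Ico_ae_eq_Ioc, ← intervalIntegral.integral_of_le (by positivity)]
  split_ifs with hk
  · simp [hk]
  · have hc : Complex.I * k ≠ 0 := by simp [hk]
    rw [integral_exp_mul_complex hc]
    have : Complex.exp (Complex.I * k * (2 * π)) = 1 := by
      rw [show Complex.I * k * (2 * π) = k * (2 * π * Complex.I) by ring]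
      exact Complex.exp_int_mul_two_pi_mul_I k
    push_cast
    simp [this]

lemma fchar_eq_prod (ξ : Frq) (x : Pt) :
    fchar ξ x = ∏ i, Complex.exp (Complex.I * ξ i * x i) := by
  simp only [fchar, fdot, ← Complex.exp_sum, Complex.ofReal_sum, Complex.ofReal_mul,
    Complex.ofReal_intCast, Finset.mul_sum, mul_assoc]

lemma μT_eq_pi : μT = Measure.pi fun _ => volume.restrict (Set.Ico 0 (2 * π)) := by
  rw [μT, torusCube, volume_pi, Measure.restrict_pi_pi]

lemma integral_fchar (ξ : Frq) :
    ∫ x, fchar ξ x ∂μT = if ξ = 0 then (((2 * π) ^ 3 : ℝ) : ℂ) else 0 := by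
  simp_rw [μT_eq_pi, fchar_eq_prod]
  rw [integral_fintype_prod_eq_prod (fun i (t : ℝ) => Complex.exp (Complex.I * ξ i * t))]
  simp_rw [integral_Ico_exp_I_int_mul]
  split_ifs with h
  · simp [h]
  · obtain ⟨i, hi⟩ := Function.ne_iff.1 h
    exact Finset.prod_eq_zero (Finset.mem_univ i) (if_neg hi)

lemma conj_fchar (ξ : Frq) (x : Pt) : conj (fchar ξ x) = fchar (-ξ) x := by
  simp only [fchar, fdot, ← Complex.exp_conj, map_mul, Complex.conj_I, Complex.conj_ofReal,
    Pi.neg_apply, Int.cast_neg, neg_mul, Finset.sum_neg_distrib, Complex.ofReal_neg, mul_neg]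

lemma fchar_mul_conj (ξ η : Frq) (x : Pt) : fchar ξ x * conj (fchar η x) = fchar (ξ - η) x := by
  rw [conj_fchar, fchar, fchar, fchar, ← Complex.exp_add, ← mul_add]
  congr 2
  simp only [fdot, Pi.sub_apply, Pi.neg_apply, Int.cast_sub, Int.cast_neg, sub_mul, neg_mul,
    Finset.sum_sub_distrib, Finset.sum_neg_distrib]
  push_cast
  ring

@[fun_prop]
lemma continuous_fchar (ξ : Frq) : Continuous (fchar ξ) := by
  unfold fchar fdot
  fun_prop

lemma Continuous.integrable_μT {E : Type*} [NormedAddCommGroup E] {g : Pt → E}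
    (hg : Continuous g) : Integrable g μT :=
  (hg.continuousOn.integrableOn_compact (isCompact_univ_pi fun _ => isCompact_Icc)).mono_set
    (Set.pi_mono fun _ _ => Set.Ico_subset_Icc_self)

lemma integral_normSq_sum_fchar (S : Finset Frq) (b : Frq → ℂ) :
    ∫ x, Complex.normSq (∑ ξ ∈ S, b ξ * fchar ξ x) ∂μT =
      (2 * π) ^ 3 * ∑ ξ ∈ S, Complex.normSq (b ξ) := by
  apply Complex.ofReal_injective
  have hint : ∀ ξ η : Frq, Integrable (fun x => b ξ * conj (b η) * fchar (ξ - η) x) μT :=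
    fun ξ η => (continuous_const.mul (continuous_fchar _)).integrable_μT
  have hexpand : ∀ x, (Complex.normSq (∑ ξ ∈ S, b ξ * fchar ξ x) : ℂ) =
      ∑ ξ ∈ S, ∑ η ∈ S, b ξ * conj (b η) * fchar (ξ - η) x := by
    intro x
    simp only [← Complex.mul_conj, map_sum, Finset.sum_mul_sum, map_mul, ← fchar_mul_conj]
    exact Finset.sum_congr rfl fun ξ _ => Finset.sum_congr rfl fun η _ => by ring
  rw [← integral_complex_ofReal]
  simp_rw [hexpand]
  rw [integral_finsetSum _ fun ξ _ => integrable_finsetSum _ fun η _ => hint ξ η]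
  simp_rw [integral_finsetSum _ fun η _ => hint _ η, integral_const_mul, integral_fchar,
    sub_eq_zero, mul_ite, mul_zero, Finset.sum_ite_eq, Complex.mul_conj]
  push_cast
  rw [Finset.mul_sum]
  exact Finset.sum_congr rfl fun ξ hξ => by rw [if_pos hξ, mul_comm]

section SumOfSquares

variable {ι : Type*} [Fintype ι]

lemma norm_sq_le_sum_sq (v : ι → ℝ) : ‖v‖ ^ 2 ≤ ∑ i, v i ^ 2 := by
  have : ‖v‖ ≤ √(∑ i, v i ^ 2) := (pi_norm_le_iff_of_nonneg (Real.sqrt_nonneg _)).2 fun i =>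
    Real.abs_le_sqrt (Finset.single_le_sum (fun j _ => sq_nonneg (v j)) (Finset.mem_univ i))
  calc ‖v‖ ^ 2 ≤ √(∑ i, v i ^ 2) ^ 2 := by gcongr
    _ = ∑ i, v i ^ 2 := Real.sq_sqrt (by positivity)

lemma sum_sq_le_card_mul_norm_sq (v : ι → ℝ) : ∑ i, v i ^ 2 ≤ Fintype.card ι * ‖v‖ ^ 2 := by
  calc ∑ i, v i ^ 2 ≤ ∑ _i : ι, ‖v‖ ^ 2 :=
        Finset.sum_le_sum fun i _ => sq_le_sq.2 (by rw [abs_norm]; exact norm_le_pi_norm v i)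
    _ = Fintype.card ι * ‖v‖ ^ 2 := by simp

lemma abs_mul_le_sum_sq (v : ι → ℝ) (i k : ι) : |v i * v k| ≤ ∑ m, v m ^ 2 := by
  have h : ∀ i, |v i| ≤ √(∑ m, v m ^ 2) := fun i =>
    Real.abs_le_sqrt (Finset.single_le_sum (fun m _ => sq_nonneg (v m)) (Finset.mem_univ i))
  rw [abs_mul, ← Real.mul_self_sqrt (by positivity : 0 ≤ ∑ m, v m ^ 2)]
  exact mul_le_mul (h i) (h k) (abs_nonneg _) (Real.sqrt_nonneg _)

variable {α : Type*} [MeasurableSpace α] {μ : Measure α}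

lemma toReal_eLpNorm_two_eq_sqrt {E : Type*} [NormedAddCommGroup E] {f : α → E}
    (hf : MemLp f 2 μ) : (eLpNorm f 2 μ).toReal = √(∫ x, ‖f x‖ ^ 2 ∂μ) := by
  rw [hf.eLpNorm_eq_integral_rpow_norm two_ne_zero ENNReal.ofNat_ne_top,
    ENNReal.toReal_ofReal (by positivity), Real.sqrt_eq_rpow]
  norm_num

variable {u : α → ι → ℝ}

lemma sqrt_integral_sum_sq_div_card_le (hu : MemLp u 2 μ) :
    √((∫ x, ∑ i, u x i ^ 2 ∂μ) / Fintype.card ι) ≤ (eLpNorm u 2 μ).toReal := by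
  rw [toReal_eLpNorm_two_eq_sqrt hu]
  refine Real.sqrt_le_sqrt (div_le_of_le_mul₀ (Nat.cast_nonneg _)
    (integral_nonneg fun x => by positivity) ?_)
  rw [← integral_mul_const]
  exact integral_mono (integrable_finsetSum _ fun i _ => (hu.eval i).integrable_sq)
    ((hu.integrable_norm_pow two_ne_zero).mul_const _) fun x =>
      (sum_sq_le_card_mul_norm_sq (u x)).trans_eq (mul_comm _ _)

lemma toReal_eLpNorm_two_le_sqrt_integral_sum_sq (hu : MemLp u 2 μ) :
    (eLpNorm u 2 μ).toReal ≤ √(∫ x, ∑ i, u x i ^ 2 ∂μ) := by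
  rw [toReal_eLpNorm_two_eq_sqrt hu]
  exact Real.sqrt_le_sqrt (integral_mono (hu.integrable_norm_pow two_ne_zero)
    (integrable_finsetSum _ fun i _ => (hu.eval i).integrable_sq) fun x => norm_sq_le_sum_sq (u x))

end SumOfSquares

def trigPoly (S : Finset Frq) (b : Frq → Fin 3 → ℂ) : VF :=
  fun x i => (∑ ξ ∈ S, b ξ i * fchar ξ x).re

lemma conj_sum_fchar_eq_self {S : Finset Frq} (hS : ∀ ξ, -ξ ∈ S ↔ ξ ∈ S) {b : Frq → ℂ}
    (hb : ∀ ξ, b (-ξ) = conj (b ξ)) (x : Pt) :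
    conj (∑ ξ ∈ S, b ξ * fchar ξ x) = ∑ ξ ∈ S, b ξ * fchar ξ x := by
  rw [map_sum]
  exact Finset.sum_equiv (Equiv.neg Frq) (fun ξ => (hS ξ).symm) fun ξ _ => by
    simp [conj_fchar, hb]

lemma continuous_trigPoly (S : Finset Frq) (b : Frq → Fin 3 → ℂ) :
    Continuous (trigPoly S b) := by
  unfold trigPoly
  fun_prop

lemma memLp_trigPoly (S : Finset Frq) (b : Frq → Fin 3 → ℂ) : MemLp (trigPoly S b) 2 μT :=
  (memLp_two_iff_integrable_sq_norm (continuous_trigPoly S b).aestronglyMeasurable).2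
    ((continuous_trigPoly S b).norm.pow 2).integrable_μT

lemma integral_sum_sq_trigPoly {S : Finset Frq} (hS : ∀ ξ, -ξ ∈ S ↔ ξ ∈ S)
    {b : Frq → Fin 3 → ℂ} (hb : ∀ ξ i, b (-ξ) i = conj (b ξ i)) :
    ∫ x, ∑ i, trigPoly S b x i ^ 2 ∂μT = (2 * π) ^ 3 * ∑ ξ ∈ S, ∑ i, Complex.normSq (b ξ i) := by
  have hsq : ∀ x i, trigPoly S b x i ^ 2 = Complex.normSq (∑ ξ ∈ S, b ξ i * fchar ξ x) := by
    intro x i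
    have him := Complex.conj_eq_iff_im.1 (conj_sum_fchar_eq_self hS (b := (b · i)) (hb · i) x)
    rw [trigPoly, Complex.normSq_apply, him]
    ring
  simp_rw [hsq]
  rw [integral_finsetSum _ fun i _ => ?_, Finset.sum_comm, Finset.mul_sum]
  · simp_rw [integral_normSq_sum_fchar]
  · exact (Continuous.integrable_μT (by fun_prop))

lemma lpn_trigPoly_bounds {S : Finset Frq} (hS : ∀ ξ, -ξ ∈ S ↔ ξ ∈ S)
    {b : Frq → Fin 3 → ℂ} (hb : ∀ ξ i, b (-ξ) i = conj (b ξ i)) :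
    √((2 * π) ^ 3 * (∑ ξ ∈ S, ∑ i, Complex.normSq (b ξ i)) / 3) ≤ lpn 2 (trigPoly S b) ∧
      lpn 2 (trigPoly S b) ≤ √((2 * π) ^ 3 * ∑ ξ ∈ S, ∑ i, Complex.normSq (b ξ i)) := by
  have h := integral_sum_sq_trigPoly hS hb
  constructor
  · simpa [lpn, h] using sqrt_integral_sum_sq_div_card_le (memLp_trigPoly S b)
  · simpa [lpn, h] using toReal_eLpNorm_two_le_sqrt_integral_sum_sq (memLp_trigPoly S b)

section LatticeCube

variable {ι : Type*} [Fintype ι] [DecidableEq ι]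

def latticeCube (c : ι → ℤ) (n : ℕ) : Finset (ι → ℤ) := Finset.Icc (c - n) (c + n)

lemma mem_latticeCube {c ξ : ι → ℤ} {n : ℕ} : ξ ∈ latticeCube c n ↔ ∀ i, |ξ i - c i| ≤ n := by
  simp only [latticeCube, Finset.mem_Icc, Pi.le_def, abs_le, Pi.sub_apply, Pi.add_apply,
    Pi.natCast_apply, ← forall_and]
  exact forall_congr' fun i => by omega

lemma card_latticeCube (c : ι → ℤ) (n : ℕ) :
    #(latticeCube c n) = (2 * n + 1) ^ Fintype.card ι := by
  rw [latticeCube, Pi.card_Icc, ← Finset.card_univ, ← Finset.prod_const]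
  refine Finset.prod_congr rfl fun i _ => ?_
  rw [Int.card_Icc]
  simp only [Pi.sub_apply, Pi.add_apply, Pi.natCast_apply]
  omega

lemma neg_mem_latticeCube_zero {ξ : ι → ℤ} {n : ℕ} :
    -ξ ∈ latticeCube 0 n ↔ ξ ∈ latticeCube 0 n := by
  simp [mem_latticeCube, abs_neg]

end LatticeCube

lemma lam_pos (m : ℕ) : 0 < lam m := by
  unfold lam
  positivity

lemma one_le_lam (m : ℕ) : 1 ≤ lam m := one_le_pow₀ one_le_two

lemma lam_pred_le (m : ℕ) : lam (m - 1) ≤ lam m := pow_le_pow_right₀ one_le_two (Nat.sub_le m 1)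

lemma abs_le_of_mem_blockA {m : ℕ} {ξ : Frq} (h : ξ ∈ blockA m) (i : Fin 3) :
    |(ξ i : ℝ)| ≤ 11 / 10 * lam m := by
  obtain ⟨h0, h1, h2, h3⟩ := h
  have := lam_pos m
  fin_cases i
  · exact abs_le.2 ⟨by simp; linarith, h1⟩
  · exact h2.trans (by linarith)
  · exact h3.trans (by linarith)

lemma abs_le_of_mem_blockB {m : ℕ} {ξ : Frq} (h : ξ ∈ blockB m) (i : Fin 3) :
    |(ξ i : ℝ)| ≤ 11 / 10 * lam m := by
  obtain ⟨h0, h1, h2, h3⟩ := h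
  have := lam_pos (m - 1)
  have := lam_pred_le m
  fin_cases i
  · exact h0.trans (by linarith)
  · exact h1.trans (by linarith)
  · exact abs_le.2 ⟨by simp; linarith, by simp; linarith⟩

lemma abs_le_of_mem_blockC {m : ℕ} {ξ : Frq} (h : ξ ∈ blockC m) (i : Fin 3) :
    |(ξ i : ℝ)| ≤ 11 / 5 * lam m := by
  obtain ⟨a, ha, b, hb, rfl⟩ := Set.mem_add.1 h
  calc |((a + b) i : ℝ)| ≤ |(a i : ℝ)| + |(b i : ℝ)| := by
        rw [Pi.add_apply, Int.cast_add]; exact abs_add_le _ _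
    _ ≤ 11 / 10 * lam m + 11 / 10 * lam m :=
      add_le_add (abs_le_of_mem_blockA ha i) (abs_le_of_mem_blockB hb i)
    _ = 11 / 5 * lam m := by ring

lemma mem_latticeCube_of_abs_le {m : ℕ} {ξ : Frq} (h : ∀ i, |(ξ i : ℝ)| ≤ 3 * lam m) :
    ξ ∈ latticeCube 0 (3 * 2 ^ m) := by
  refine mem_latticeCube.2 fun i => ?_
  have := h i
  simp only [lam] at this
  simp only [Pi.zero_apply, sub_zero]
  exact_mod_cast this

lemma mem_latticeCube_of_mem_supports {m : ℕ} {ξ : Frq}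
    (h : ξ ∈ blockA m ∪ -blockA m ∪ blockC m ∪ -blockC m) : ξ ∈ latticeCube 0 (3 * 2 ^ m) := by
  refine mem_latticeCube_of_abs_le fun i => ?_
  have := lam_pos m
  have habs : |(ξ i : ℝ)| = |((-ξ) i : ℝ)| := by simp
  rcases h with ((h | h) | h) | h
  · linarith [abs_le_of_mem_blockA h i]
  · linarith [abs_le_of_mem_blockA (Set.mem_neg.1 h) i]
  · linarith [abs_le_of_mem_blockC h i]
  · linarith [abs_le_of_mem_blockC (Set.mem_neg.1 h) i]

lemma latticeCube_subset_blockA (m : ℕ) :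
    ↑(latticeCube (Pi.single (0 : Fin 3) (2 ^ m : ℤ)) (2 ^ m / 10)) ⊆ blockA m := by
  intro ξ h
  have hn : ((2 ^ m / 10 : ℕ) : ℝ) ≤ lam m / 10 := by
    rw [lam]; exact_mod_cast Nat.cast_div_le
  have hcast : ∀ k : ℤ, |k| ≤ ((2 ^ m / 10 : ℕ) : ℤ) → |(k : ℝ)| ≤ lam m / 10 :=
    fun k hk => hn.trans' <| by
      simpa only [Int.cast_abs, Int.cast_natCast] using Int.cast_le (R := ℝ) |>.2 hk
  have h0 := hcast (ξ 0 - 2 ^ m) (by simpa using mem_latticeCube.1 h 0)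
  have h1 := hcast (ξ 1) (by simpa using mem_latticeCube.1 h 1)
  have h2 := hcast (ξ 2) (by simpa using mem_latticeCube.1 h 2)
  push_cast at h0
  change |(ξ 0 : ℝ) - lam m| ≤ lam m / 10 at h0
  obtain ⟨h0l, h0r⟩ := abs_le.1 h0
  exact ⟨by linarith, by linarith, h1, h2⟩

lemma pow_le_card_latticeCube_blockA (m : ℕ) :
    (lam m / 10) ^ 3 ≤ #(latticeCube (Pi.single (0 : Fin 3) (2 ^ m : ℤ)) (2 ^ m / 10)) := by
  have hn : lam m / 10 ≤ ((2 ^ m / 10 : ℕ) : ℝ) + 1 := by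
    rw [lam, div_le_iff₀ (by norm_num)]
    exact_mod_cast (by omega : 2 ^ m ≤ (2 ^ m / 10 + 1) * 10)
  rw [card_latticeCube, Fintype.card_fin]
  push_cast
  gcongr
  · exact (div_pos (lam_pos m) (by norm_num)).le
  · linarith [Nat.cast_nonneg (α := ℝ) (2 ^ m / 10)]

lemma card_latticeCube_three_mul_pow_le (m : ℕ) :
    (#(latticeCube (0 : Frq) (3 * 2 ^ m)) : ℝ) ≤ (7 * lam m) ^ 3 := by
  rw [card_latticeCube, Fintype.card_fin]
  have := one_le_lam m
  push_cast
  rw [← lam]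
  gcongr
  linarith

lemma esymb_neg (k : Fin 3) (ξ : Frq) : esymb k (-ξ) = esymb k ξ := by
  simp only [esymb, neg_eq_zero, Pi.neg_apply, Int.cast_neg, neg_mul_neg, even_two.neg_pow]

lemma abs_esymb_le (k : Fin 3) (ξ : Frq) (i : Fin 3) : |esymb k ξ i| ≤ 2 := by
  have hδ : |(Pi.single k 1 : Vec) i| ≤ 1 := by
    rcases eq_or_ne i k with rfl | h <;> simp [*]
  unfold esymb
  split_ifs
  · linarith
  · calc |(Pi.single k 1 : Vec) i - (ξ i : ℝ) * ξ k / ∑ m, (ξ m : ℝ) ^ 2|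
        ≤ |(Pi.single k 1 : Vec) i| + |(ξ i : ℝ) * ξ k / ∑ m, (ξ m : ℝ) ^ 2| := abs_sub _ _
      _ ≤ 1 + 1 := by
        refine add_le_add hδ ?_
        rw [abs_div]
        exact div_le_one_of_le₀ ((abs_mul_le_sum_sq (fun m => (ξ m : ℝ)) i k).trans (le_abs_self _))
          (abs_nonneg _)
      _ = 2 := by norm_num

lemma half_le_esymb_one_one {m : ℕ} {ξ : Frq} (hξ : ξ ∈ blockA m) : 1 / 2 ≤ esymb 1 ξ 1 := by
  obtain ⟨h0, -, h1, -⟩ := hξ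
  have hl := lam_pos m
  have hne : ξ ≠ 0 := fun h => by simp [h] at h0; linarith
  have hsum : (ξ 0 : ℝ) ^ 2 ≤ ∑ m, (ξ m : ℝ) ^ 2 :=
    Finset.single_le_sum (fun m _ => sq_nonneg (ξ m : ℝ)) (Finset.mem_univ 0)
  have hξ1 : (ξ 1 : ℝ) ^ 2 ≤ (lam m / 10) ^ 2 := sq_le_sq' (abs_le.1 h1).1 (abs_le.1 h1).2
  have hpos : 0 < ∑ m, (ξ m : ℝ) ^ 2 := by nlinarith
  have : (ξ 1 : ℝ) * ξ 1 / ∑ m, (ξ m : ℝ) ^ 2 ≤ 1 / 2 := by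
    rw [div_le_iff₀ hpos]
    nlinarith
  simp only [esymb, if_neg hne, Pi.single_eq_same]
  linarith

lemma indicator_apply_neg_of_even {G M : Type*} [InvolutiveNeg G] [Zero M] (s : Set G)
    {f : G → M} (hf : ∀ x, f (-x) = f x) (x : G) : s.indicator f (-x) = (-s).indicator f x := by
  by_cases h : -x ∈ s <;> simp [Set.indicator, h, hf]

lemma indicator_ofReal_apply {G : Type*} (s : Set G) (f : G → ℝ) (x : G) :
    s.indicator (fun y => (f y : ℂ)) x = ((s.indicator f x : ℝ) : ℂ) :=
  congrFun (Set.indicator_comp_of_zero (g := Complex.ofReal) Complex.ofReal_zero) x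

section UhatH

variable (α : ℝ) (qs : ℕ → ℕ) (j : ℕ)

lemma UhatH_eq (ξ : Frq) (i : Fin 3) :
    UhatH α qs j ξ i =
      (lam (qs j) ^ (2 * α - 4) *
          (blockA (qs j) ∪ -blockA (qs j)).indicator (fun ξ => esymb 1 ξ i) ξ : ℝ) +
        (lam (qs j) ^ (2 * α - 4) *
          ((blockC (qs j)).indicator (fun ξ => esymb 1 ξ i - esymb 0 ξ i) ξ -
            (-blockC (qs j)).indicator (fun ξ => esymb 1 ξ i - esymb 0 ξ i) ξ) : ℝ) *
          Complex.I := by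
  simp only [UhatH, indicator_ofReal_apply]
  push_cast
  ring

lemma UhatH_neg (ξ : Frq) (i : Fin 3) : UhatH α qs j (-ξ) i = conj (UhatH α qs j ξ i) := by
  have hA : -(blockA (qs j) ∪ -blockA (qs j)) = blockA (qs j) ∪ -blockA (qs j) := by
    rw [Set.union_neg, neg_neg, Set.union_comm]
  have he : ∀ ζ : Frq, esymb 1 (-ζ) i = esymb 1 ζ i := fun ζ => by rw [esymb_neg]
  have hd : ∀ ζ : Frq, esymb 1 (-ζ) i - esymb 0 (-ζ) i = esymb 1 ζ i - esymb 0 ζ i :=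
    fun ζ => by rw [esymb_neg, esymb_neg]
  simp only [UhatH_eq, indicator_apply_neg_of_even (f := fun ζ => esymb 1 ζ i) _ he,
    indicator_apply_neg_of_even (f := fun ζ => esymb 1 ζ i - esymb 0 ζ i) _ hd, hA, neg_neg,
    map_add, map_mul, Complex.conj_ofReal, Complex.conj_I]
  push_cast
  ring

lemma re_UhatH_of_mem_blockA {ξ : Frq} (hξ : ξ ∈ blockA (qs j)) :
    (UhatH α qs j ξ 1).re = lam (qs j) ^ (2 * α - 4) * esymb 1 ξ 1 := by
  simp [UhatH_eq, Set.indicator_of_mem (Set.mem_union_left _ hξ)]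

lemma normSq_UhatH_le (ξ : Frq) (i : Fin 3) :
    Complex.normSq (UhatH α qs j ξ i) ≤ 100 * (lam (qs j) ^ (2 * α - 4)) ^ 2 := by
  have hind : ∀ (s : Set Frq) (f : Frq → ℝ) (B : ℝ), (∀ ζ, |f ζ| ≤ B) → |s.indicator f ξ| ≤ B :=
    fun s f B hf => (norm_indicator_le_norm_self f ξ).trans (hf ξ)
  rw [UhatH_eq, Complex.normSq_add_mul_I, mul_pow, mul_pow]
  set d := fun ζ : Frq => esymb 1 ζ i - esymb 0 ζ i
  have hd : ∀ ζ, |d ζ| ≤ 4 := fun ζ =>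
    (abs_sub _ _).trans (by linarith [abs_esymb_le 1 ζ i, abs_esymb_le 0 ζ i])
  have ha := hind (blockA (qs j) ∪ -blockA (qs j)) _ _ fun ζ => abs_esymb_le 1 ζ i
  have hc : |(blockC (qs j)).indicator d ξ - (-blockC (qs j)).indicator d ξ| ≤ 8 :=
    (abs_sub _ _).trans (by linarith [hind (blockC (qs j)) d 4 hd, hind (-blockC (qs j)) d 4 hd])
  have hK := sq_nonneg (lam (qs j) ^ (2 * α - 4))
  nlinarith [mul_le_mul_of_nonneg_left (sq_le_sq' (abs_le.1 ha).1 (abs_le.1 ha).2) hK,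
    mul_le_mul_of_nonneg_left (sq_le_sq' (abs_le.1 hc).1 (abs_le.1 hc).2) hK]

lemma UhatH_eq_zero_of_notMem {ξ : Frq} (hξ : ξ ∉ latticeCube 0 (3 * 2 ^ qs j)) (i : Fin 3) :
    UhatH α qs j ξ i = 0 := by
  have h : ξ ∉ blockA (qs j) ∪ -blockA (qs j) ∪ blockC (qs j) ∪ -blockC (qs j) :=
    fun h' => hξ (mem_latticeCube_of_mem_supports h')
  simp only [Set.mem_union, not_or] at h
  obtain ⟨⟨⟨hA, hA'⟩, hC⟩, hC'⟩ := h
  simp [UhatH, hA, hA', hC, hC']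

end UhatH

lemma UpH_eq_trigPoly (α : ℝ) (qs : ℕ → ℕ) (j : ℕ) :
    UpH α qs j = trigPoly (latticeCube 0 (3 * 2 ^ qs j)) (UhatH α qs j) := by
  funext x i
  rw [UpH, trigPoly, tsum_eq_sum fun ξ hξ => by rw [UhatH_eq_zero_of_notMem α qs j hξ, zero_mul]]

lemma sq_rpow_eq_pow_three_mul_sq_rpow {x : ℝ} (hx : 0 < x) (s : ℝ) :
    (x ^ (s - 5 / 2)) ^ 2 = x ^ 3 * (x ^ (s - 4)) ^ 2 := by
  rw [← Real.rpow_natCast, ← Real.rpow_natCast x, ← Real.rpow_natCast (x ^ (s - 4)),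
    ← Real.rpow_mul hx.le, ← Real.rpow_mul hx.le, ← Real.rpow_add hx]
  congr 1
  push_cast
  ring

section Energy

variable (α : ℝ) (qs : ℕ → ℕ) (j : ℕ)

lemma sum_normSq_UhatH_le :
    ∑ ξ ∈ latticeCube 0 (3 * 2 ^ qs j), ∑ i, Complex.normSq (UhatH α qs j ξ i) ≤
      102900 * (lam (qs j) ^ (2 * α - 5 / 2)) ^ 2 := by
  rw [sq_rpow_eq_pow_three_mul_sq_rpow (lam_pos _)]
  calc ∑ ξ ∈ latticeCube 0 (3 * 2 ^ qs j), ∑ i, Complex.normSq (UhatH α qs j ξ i)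
      ≤ ∑ _ξ ∈ latticeCube 0 (3 * 2 ^ qs j), ∑ _i : Fin 3, 100 * (lam (qs j) ^ (2 * α - 4)) ^ 2 :=
        Finset.sum_le_sum fun ξ _ => Finset.sum_le_sum fun i _ => normSq_UhatH_le α qs j ξ i
    _ = #(latticeCube (0 : Frq) (3 * 2 ^ qs j)) * (300 * (lam (qs j) ^ (2 * α - 4)) ^ 2) := by
        simp only [Finset.sum_const, Finset.card_univ, Fintype.card_fin, nsmul_eq_mul]
        push_cast
        ring
    _ ≤ (7 * lam (qs j)) ^ 3 * (300 * (lam (qs j) ^ (2 * α - 4)) ^ 2) := by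
        gcongr; exact card_latticeCube_three_mul_pow_le _
    _ = 102900 * (lam (qs j) ^ 3 * (lam (qs j) ^ (2 * α - 4)) ^ 2) := by ring

lemma le_sum_normSq_UhatH :
    (lam (qs j) ^ (2 * α - 5 / 2)) ^ 2 / 4000 ≤
      ∑ ξ ∈ latticeCube 0 (3 * 2 ^ qs j), ∑ i, Complex.normSq (UhatH α qs j ξ i) := by
  rw [sq_rpow_eq_pow_three_mul_sq_rpow (lam_pos _)]
  set K := lam (qs j) ^ (2 * α - 4)
  have hK : 0 < K := Real.rpow_pos_of_pos (lam_pos _) _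
  set A := latticeCube (Pi.single (0 : Fin 3) (2 ^ qs j : ℤ)) (2 ^ qs j / 10)
  have hA : ∀ ξ ∈ A, (K / 2) ^ 2 ≤ ∑ i, Complex.normSq (UhatH α qs j ξ i) := fun ξ hξ => by
    have hmem := latticeCube_subset_blockA (qs j) hξ
    have hre : K / 2 ≤ (UhatH α qs j ξ 1).re := by
      rw [re_UhatH_of_mem_blockA α qs j hmem]
      nlinarith [half_le_esymb_one_one hmem]
    calc (K / 2) ^ 2 ≤ (UhatH α qs j ξ 1).re * (UhatH α qs j ξ 1).re := by nlinarith
      _ ≤ Complex.normSq (UhatH α qs j ξ 1) := Complex.re_sq_le_normSq _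
      _ ≤ ∑ i, Complex.normSq (UhatH α qs j ξ i) :=
        Finset.single_le_sum (fun i _ => Complex.normSq_nonneg _) (Finset.mem_univ 1)
  have hAbox : A ⊆ latticeCube 0 (3 * 2 ^ qs j) := fun ξ hξ =>
    mem_latticeCube_of_mem_supports (Or.inl (Or.inl (Or.inl (latticeCube_subset_blockA _ hξ))))
  calc lam (qs j) ^ 3 * K ^ 2 / 4000 = (lam (qs j) / 10) ^ 3 * (K / 2) ^ 2 := by ring
    _ ≤ #A * (K / 2) ^ 2 := by gcongr; exact pow_le_card_latticeCube_blockA _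
    _ = ∑ _ξ ∈ A, (K / 2) ^ 2 := by simp
    _ ≤ ∑ ξ ∈ A, ∑ i, Complex.normSq (UhatH α qs j ξ i) := Finset.sum_le_sum hA
    _ ≤ ∑ ξ ∈ latticeCube 0 (3 * 2 ^ qs j), ∑ i, Complex.normSq (UhatH α qs j ξ i) :=
        Finset.sum_le_sum_of_subset_of_nonneg hAbox fun ξ _ _ =>
          Finset.sum_nonneg fun i _ => Complex.normSq_nonneg _

end Energy

theorem statement5_general (α : ℝ)
    (qs : ℕ → ℕ) :
    ∃ c C : ℝ, 0 < c ∧ c ≤ C ∧ ∀ j : ℕ,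
      c * lam (qs j) ^ (2 * α - 5 / 2) ≤ lpn 2 (UpH α qs j) ∧
      lpn 2 (UpH α qs j) ≤ C * lam (qs j) ^ (2 * α - 5 / 2) := by
  have hP : 0 < (2 * π) ^ 3 := by positivity
  refine ⟨√((2 * π) ^ 3 / 12000), √((2 * π) ^ 3 * 102900), by positivity,
    Real.sqrt_le_sqrt (by linarith), fun j => ?_⟩
  set D := lam (qs j) ^ (2 * α - 5 / 2)
  have hsqrt : ∀ a, 0 ≤ a → √a * D = √(a * D ^ 2) := fun a ha => by
    rw [Real.sqrt_mul ha, Real.sqrt_sq (Real.rpow_pos_of_pos (lam_pos _) _).le]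
  obtain ⟨hlow, hup⟩ := lpn_trigPoly_bounds (fun _ => neg_mem_latticeCube_zero) (UhatH_neg α qs j)
  have hE₁ := mul_le_mul_of_nonneg_left (le_sum_normSq_UhatH α qs j) hP.le
  have hE₂ := mul_le_mul_of_nonneg_left (sum_normSq_UhatH_le α qs j) hP.le
  rw [UpH_eq_trigPoly, hsqrt _ (by positivity), hsqrt _ (by positivity)]
  exact ⟨(Real.sqrt_le_sqrt (by linarith)).trans hlow, hup.trans (Real.sqrt_le_sqrt (by linarith))⟩

/-- `|U_{q_j}|_{L²} ∼ λ_{q_j}^{2α-5/2}` uniformly in `j`. -/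
theorem statement5 (α : ℝ) (hα : 1 ≤ α ∧ α < 5 / 4)
    (qs : ℕ → ℕ) (hqs : GoodSeq α qs) :
    ∃ c C : ℝ, 0 < c ∧ c ≤ C ∧ ∀ j : ℕ,
      c * lam (qs j) ^ (2 * α - 5 / 2) ≤ lpn 2 (UpH α qs j) ∧
      lpn 2 (UpH α qs j) ≤ C * lam (qs j) ^ (2 * α - 5 / 2) :=
  statement5_general α qs
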